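/- For every monadic deterministic macro tree transducer with regular look-ahead M one can construct a normalized monadic deterministic macro tree transducer with regular look-ahead N such that τ_N = { (expand(s), expand(t)) : (s, t) ∈ τ_M }, where for a monadic tree t = a1(⋯ an(e) ⋯) with e of rank 0, expand(t) = a1(⋯ an(e'(⊥)) ⋯) is obtained by turning the rank-0 symbol e into a rank-1 symbol e' placed above the unique rank-0 symbol ⊥. -/

import Mathlib

/-! ## Finite ordered ranked trees -/

/-- Finite ordered labeled trees. -/
inductive RTree (α : Type) : Type
  | node : α → List (RTree α) → RTree α

namespace RTree

variable {α β : Type}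

/-- The label of the root node. -/
def label : RTree α → α
  | node a _ => a

mutual
  /-- The size (number of nodes) of a tree. -/
  def size : RTree α → ℕ
    | node _ ts => 1 + sizeList ts
  def sizeList : List (RTree α) → ℕ
    | [] => 0
    | t :: ts => size t + sizeList ts
end

mutual
  /-- The height of a tree (a leaf has height 1). -/
  def height : RTree α → ℕ
    | node _ ts => 1 + heightList ts
  def heightList : List (RTree α) → ℕ
    | [] => 0
    | t :: ts => max (height t) (heightList ts)
end

mutual
  /-- Relabeling of a tree. -/
  def map (f : α → β) : RTree α → RTree β
    | node a ts => node (f a) (mapList f ts)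
  def mapList (f : α → β) : List (RTree α) → List (RTree β)
    | [] => []
    | t :: ts => map f t :: mapList f ts
end

/-- `WF rk t` means `t` is a tree over the ranked alphabet with rank function `rk`:
every node labeled `a` has exactly `rk a` children.  Thus `T_Σ = {t | WF rk t}`. -/
inductive WF (rk : α → ℕ) : RTree α → Prop
  | node {a : α} {ts : List (RTree α)} :
      ts.length = rk a → (∀ t ∈ ts, WF rk t) → WF rk (node a ts)

/-- `SubtreeAt t u r`: `u` is (the Dewey path of) a node of `t` and `r` is the
subtree of `t` rooted at `u`. -/
inductive SubtreeAt : RTree α → List ℕ → RTree α → Prop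
  | here (t : RTree α) : SubtreeAt t [] t
  | child {a : α} {ts : List (RTree α)} {i : ℕ} {u : List ℕ} {ti r : RTree α} :
      ts[i]? = some ti → SubtreeAt ti u r → SubtreeAt (node a ts) (i :: u) r

/-- `ReplaceAt t u r t'`: `u` is a node of `t`, and `t'` is the tree `t[u ← r]`
obtained from `t` by replacing the subtree rooted at `u` by `r`. -/
inductive ReplaceAt : RTree α → List ℕ → RTree α → RTree α → Prop
  | here (t r : RTree α) : ReplaceAt t [] r r
  | child {a : α} {ts : List (RTree α)} {i : ℕ} {u : List ℕ} {r ti ti' : RTree α} :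
      ts[i]? = some ti → ReplaceAt ti u r ti' →
      ReplaceAt (node a ts) (i :: u) r (node a (ts.set i ti'))

end RTree

/-- A (complete) deterministic finite-state bottom-up tree automaton over the
alphabet `S`, with state set `P` and final states `final`. -/
structure BUA (S P : Type) where
  delta : S → List P → P
  final : Set P

variable {S P : Type}

mutual
  /-- The state reached by a bottom-up automaton on a tree. -/
  def buaRun (A : BUA S P) : RTree S → P
    | .node a ts => A.delta a (buaRunList A ts)
  def buaRunList (A : BUA S P) : List (RTree S) → List P
    | [] => []
    | t :: ts => buaRun A t :: buaRunList A ts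
end

/-- A tree language over the ranked alphabet `(S, rk)` is regular if it is recognized
by a deterministic finite-state bottom-up tree automaton. -/
def RegularTreeLang (rk : S → ℕ) (L : Set (RTree S)) : Prop :=
  ∃ (P : Type) (_ : Fintype P) (A : BUA S P),
    L = {t | RTree.WF rk t ∧ buaRun A t ∈ A.final}
/-! ## Deterministic macro tree transducers

A state of rank `m+1` is encoded by `prm q = m` (its number of context parameters).
Right-hand sides of rules are trees over `Δ ∪ Q ∪ X ∪ Y`, where every `Q`-labeled
node has an input variable `x_i` as its (implicit) first child; this is encoded by
the constructor `MRhs.call q i ps`.  A top-down tree transducer is exactly a macro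
tree transducer all of whose states have rank one (`prm q = 0`).

To be able to talk about partial inputs `s[u ← x]`, input trees are trees over
`Option S`, where `none` plays the role of the fresh rank-0 symbol `x`; an
ordinary input tree `s` is represented as `RTree.map some s`.  Outputs (sentential
forms) are trees over the alphabet `PL Q D`: output symbols `PL.out d`, unresolved
state calls `PL.st q` (i.e. `q(x, t₁, …, t_m)`, whose children are the current
parameter trees), and formal context parameters `PL.pr j` (i.e. `y_{j+1}`). -/

/-- Labels of sentential forms produced by a macro tree transducer. -/
inductive PL (Q D : Type) : Type
  | out : D → PL Q D
  | st : Q → PL Q D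
  | pr : ℕ → PL Q D

/-- Right-hand sides of rules of a macro tree transducer with states `Q` and output
alphabet `D`: `out d ts` is an output symbol with subtrees, `param j` is the context
parameter `y_{j+1}`, and `call q i ps` is a state call `q(x_{i+1}, ps)`. -/
inductive MRhs (Q D : Type) : Type
  | out : D → List (MRhs Q D) → MRhs Q D
  | param : ℕ → MRhs Q D
  | call : Q → ℕ → List (MRhs Q D) → MRhs Q D

/-- Well-formedness of a right-hand side for a rule of a state with `m` parameters
and an input symbol of rank `k`: output symbols have the right number of children,
parameters are among `y_1, …, y_m`, input variables are among `x_1, …, x_k`, and a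
call of state `q'` passes exactly `prm q'` parameter trees. -/
inductive RhsWF {Q D : Type} (rkD : D → ℕ) (prm : Q → ℕ) (k m : ℕ) : MRhs Q D → Prop
  | out {d ts} : ts.length = rkD d → (∀ t ∈ ts, RhsWF rkD prm k m t) →
      RhsWF rkD prm k m (.out d ts)
  | param {j} : j < m → RhsWF rkD prm k m (.param j)
  | call {q i ps} : i < k → ps.length = prm q → (∀ t ∈ ps, RhsWF rkD prm k m t) →
      RhsWF rkD prm k m (.call q i ps)

/-- A deterministic macro tree transducer with states `Q`, input alphabet `(S, rkS)`
and output alphabet `(D, rkD)`.  `prm q` is the number of context parameters of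
state `q` (so `q` has rank `prm q + 1`); `rules q σ` is the right-hand side of the
`(q,σ)`-rule, if present (determinism: at most one rule per pair). -/
structure MTT (Q S D : Type) where
  rkS : S → ℕ
  rkD : D → ℕ
  prm : Q → ℕ
  init : Q
  rules : Q → S → Option (MRhs Q D)

namespace MTT

variable {Q S D : Type}

/-- `M` is a well-formed macro tree transducer: the initial state has rank one and
all right-hand sides are well-formed. -/
def Proper (M : MTT Q S D) : Prop :=
  M.prm M.init = 0 ∧
    ∀ q σ r, M.rules q σ = some r → RhsWF M.rkD M.prm (M.rkS σ) (M.prm q) r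

/-- `M` is total: there is exactly one rule for every state and input symbol. -/
def Total (M : MTT Q S D) : Prop := ∀ q σ, (M.rules q σ).isSome

end MTT

/-- A top-down tree transducer is a macro tree transducer each of whose states has
rank one, i.e. no context parameters. -/
def IsTopDown {Q S D : Type} (M : MTT Q S D) : Prop := ∀ q, M.prm q = 0

/-- A macro tree transducer is monadic if its input and output ranked alphabets
only contain symbols of rank 1 and rank 0. -/
def MTT.Monadic {Q S D : Type} (M : MTT Q S D) : Prop :=
  (∀ σ, M.rkS σ ≤ 1) ∧ (∀ d, M.rkD d ≤ 1)

variable {Q S D : Type}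

mutual
  /-- Second-order substitution of the parameter leaves `y_{j+1}` of a sentential
  form by the trees `vs`. -/
  def psubst (vs : List (RTree (PL Q D))) : RTree (PL Q D) → RTree (PL Q D)
    | .node (.pr j) _ => vs.getD j (.node (.pr j) [])
    | .node (.out d) ts => .node (.out d) (psubstList vs ts)
    | .node (.st q) ts => .node (.st q) (psubstList vs ts)
  def psubstList (vs : List (RTree (PL Q D))) :
      List (RTree (PL Q D)) → List (RTree (PL Q D))
    | [] => []
    | t :: ts => psubst vs t :: psubstList vs ts
end

/-- The fresh rank-0 input symbol `x` used in partial inputs `s[u ← x]`. -/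
def xLeaf {S : Type} : RTree (Option S) := .node none []

mutual
  /-- Big-step semantics of a macro tree transducer: `MEval M q s t` means that the
  computation of `M` started in state `q` on the input tree `s` (a tree over
  `Option S`, where `none` is the fresh symbol `x` of partial inputs) produces the
  (sentential form) tree `t`.  On the symbol `x` the computation blocks, yielding
  the unresolved call `q(x, y_1, …, y_m)`.  For `s ∈ T_Σ` (no occurrence of `x`)
  and well-formed transducers, `t` contains no `PL.st` labels, and `M_q(s)` is
  defined iff such a `t` exists; determinism makes `t` unique. -/
  inductive MEval (M : MTT Q S D) : Q → RTree (Option S) → RTree (PL Q D) → Prop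
    | atX (q : Q) :
        MEval M q (.node none [])
          (.node (.st q) ((List.range (M.prm q)).map fun j => .node (.pr j) []))
    | step {q : Q} {σ : S} {ss : List (RTree (Option S))} {r : MRhs Q D}
        {t : RTree (PL Q D)} :
        M.rules q σ = some r → MExpand M ss r t → MEval M q (.node (some σ) ss) t

  /-- Evaluation of a right-hand side with current input subtrees `ss`. -/
  inductive MExpand (M : MTT Q S D) :
      List (RTree (Option S)) → MRhs Q D → RTree (PL Q D) → Prop
    | out {ss d ts us} : MExpandList M ss ts us →
        MExpand M ss (.out d ts) (.node (.out d) us)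
    | param {ss j} : MExpand M ss (.param j) (.node (.pr j) [])
    | call {ss : List (RTree (Option S))} {q : Q} {i : ℕ} {ps : List (MRhs Q D)}
        {si : RTree (Option S)} {vs : List (RTree (PL Q D))} {u : RTree (PL Q D)} :
        ss[i]? = some si → MExpandList M ss ps vs → MEval M q si u →
        MExpand M ss (.call q i ps) (psubst vs u)

  inductive MExpandList (M : MTT Q S D) :
      List (RTree (Option S)) → List (MRhs Q D) → List (RTree (PL Q D)) → Prop
    | nil {ss} : MExpandList M ss [] []
    | cons {ss t ts u us} : MExpand M ss t u → MExpandList M ss ts us →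
        MExpandList M ss (t :: ts) (u :: us)
end

/-- The translation `τ_M ⊆ T_Σ × T_Δ` realized by a macro tree transducer `M`
(the graph of the partial function `τ_M : T_Σ ⇀ T_Δ`). -/
def MTT.tau (M : MTT Q S D) : Set (RTree S × RTree D) :=
  {p | RTree.WF M.rkS p.1 ∧ MEval M M.init (RTree.map some p.1) (RTree.map PL.out p.2)}

/-! ## Macro tree transducers with regular look-ahead -/

/-- A deterministic bottom-up look-ahead automaton over the alphabet `S` with
state set `P` (given by its transition function; no final states). -/
structure LA (S P : Type) where
  delta : S → List P → Option P

variable {S P : Type}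

mutual
  /-- `LARun A s p`: the look-ahead automaton `A` recognizes the tree `s` in
  state `p`. -/
  inductive LARun (A : LA S P) : RTree S → P → Prop
    | node {σ : S} {ss : List (RTree S)} {ps : List P} {p : P} :
        LARunList A ss ps → A.delta σ ps = some p → LARun A (.node σ ss) p
  inductive LARunList (A : LA S P) : List (RTree S) → List P → Prop
    | nil : LARunList A [] []
    | cons {s ss p ps} : LARun A s p → LARunList A ss ps →
        LARunList A (s :: ss) (p :: ps)
end

/-- A deterministic macro tree transducer with regular look-ahead: in addition to
the data of a macro tree transducer it carries a look-ahead automaton `la`, and a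
rule `rules q σ ps` (at most one per state, input symbol and tuple of look-ahead
states) is applicable to an input subtree `σ(s₁,…,s_k)` only if the look-ahead
automaton recognizes `s_i` in state `ps_i` for every `i`. -/
structure MTTR (Q S D P : Type) where
  rkS : S → ℕ
  rkD : D → ℕ
  prm : Q → ℕ
  init : Q
  la : LA S P
  rules : Q → S → List P → Option (MRhs Q D)

namespace MTTR

variable {Q D : Type}

/-- Well-formedness of a macro tree transducer with look-ahead. -/
def Proper (M : MTTR Q S D P) : Prop :=
  M.prm M.init = 0 ∧
    ∀ q σ ps r, M.rules q σ ps = some r → RhsWF M.rkD M.prm (M.rkS σ) (M.prm q) r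

/-- A top-down tree transducer (with look-ahead) is a macro tree transducer (with
look-ahead) each of whose states has rank one, i.e. no context parameters. -/
def IsTopDown (M : MTTR Q S D P) : Prop := ∀ q, M.prm q = 0

/-- A macro tree transducer (with look-ahead) is monadic if its input and output
alphabets only contain symbols of rank 1 and rank 0. -/
def Monadic (M : MTTR Q S D P) : Prop :=
  (∀ σ, M.rkS σ ≤ 1) ∧ (∀ d, M.rkD d ≤ 1)

end MTTR

variable {Q D : Type}

mutual
  /-- Big-step semantics of a macro tree transducer with regular look-ahead. -/
  inductive REval (M : MTTR Q S D P) : Q → RTree S → RTree (PL Q D) → Prop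
    | step {q : Q} {σ : S} {ss : List (RTree S)} {ps : List P} {r : MRhs Q D}
        {t : RTree (PL Q D)} :
        LARunList M.la ss ps → M.rules q σ ps = some r → RExpand M ss r t →
        REval M q (.node σ ss) t

  inductive RExpand (M : MTTR Q S D P) :
      List (RTree S) → MRhs Q D → RTree (PL Q D) → Prop
    | out {ss d ts us} : RExpandList M ss ts us →
        RExpand M ss (.out d ts) (.node (.out d) us)
    | param {ss j} : RExpand M ss (.param j) (.node (.pr j) [])
    | call {ss : List (RTree S)} {q : Q} {i : ℕ} {ps : List (MRhs Q D)}
        {si : RTree S} {vs : List (RTree (PL Q D))} {u : RTree (PL Q D)} :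
        ss[i]? = some si → RExpandList M ss ps vs → REval M q si u →
        RExpand M ss (.call q i ps) (psubst vs u)

  inductive RExpandList (M : MTTR Q S D P) :
      List (RTree S) → List (MRhs Q D) → List (RTree (PL Q D)) → Prop
    | nil {ss} : RExpandList M ss [] []
    | cons {ss t ts u us} : RExpand M ss t u → RExpandList M ss ts us →
        RExpandList M ss (t :: ts) (u :: us)
end

/-- The translation `τ_M ⊆ T_Σ × T_Δ` realized by a macro tree transducer with
regular look-ahead. -/
def MTTR.tau (M : MTTR Q S D P) : Set (RTree S × RTree D) :=
  {p | RTree.WF M.rkS p.1 ∧ REval M M.init p.1 (RTree.map PL.out p.2)}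

/-- `ParamOccurs j r`: the context parameter `y_{j+1}` occurs in the right-hand
side `r`. -/
inductive ParamOccurs {Q D : Type} (j : ℕ) : MRhs Q D → Prop
  | param : ParamOccurs j (.param j)
  | out {d ts t} : t ∈ ts → ParamOccurs j t → ParamOccurs j (.out d ts)
  | call {q i ps t} : t ∈ ps → ParamOccurs j t → ParamOccurs j (.call q i ps)

/-- A macro tree transducer with look-ahead is nondeleting if every parameter of a
state occurs in the right-hand side of each of its rules. -/
def MTTR.Nondeleting {Q S D P : Type} (M : MTTR Q S D P) : Prop :=
  ∀ q σ ps r, M.rules q σ ps = some r → ∀ j < M.prm q, ParamOccurs j r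

/-- A monadic macro tree transducer (with look-ahead) is normalized if (N0) it is
nondeleting, (N1) every state has rank two or one (at most one parameter), and
(N2) the input and output alphabets each contain exactly one symbol of rank 0. -/
def MTTR.Normalized {Q S D P : Type} (M : MTTR Q S D P) : Prop :=
  MTTR.Nondeleting M ∧ (∀ q, M.prm q ≤ 1) ∧
    (∃! σ, M.rkS σ = 0) ∧ (∃! d, M.rkD d = 0)

/-- `ExpandRel t t'` relates a monadic tree `t = a1(⋯ an(e) ⋯)` to the tree
`expand(t) = a1(⋯ an(e(⊥)) ⋯)` over the expanded alphabet `Option α`, in which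
every original symbol (in particular the original rank-0 symbol `e`) has rank 1
and `none` is the unique new rank-0 symbol `⊥`. -/
inductive ExpandRel {α : Type} : RTree α → RTree (Option α) → Prop
  | leaf {a : α} : ExpandRel (.node a []) (.node (some a) [.node none []])
  | step {a : α} {c : RTree α} {c' : RTree (Option α)} :
      ExpandRel c c' → ExpandRel (.node a [c]) (.node (some a) [c'])

/-- The rank function of an expanded monadic alphabet: all original symbols get
rank 1 and the new symbol `⊥ = none` has rank 0. -/
def expandRk {α : Type} : Option α → ℕ
  | none => 0
  | some _ => 1

/-!
Since `M` is monadic, every value `M_q(s)` is a chain of unary output symbols that ends either in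
a rank-0 output symbol or in one parameter `y_j`; all other parameters are deleted. The
normalized transducer therefore runs in states `(q, κ)`, where the leaf kind `κ` records whether
`M_q(s)` is ground or ends in `y_{κ+1}`, and such a state keeps only that one parameter. The
leaf kinds of all states on an input subtree form a finite table, computed bottom-up from the
table of the child by a regular look-ahead. With it, a rule of `M` is used in state `(q, κ)`
only if `κ` is its actual leaf kind, and its right-hand side is translated along its output
spine, keeping of every call just the argument in which the called state's value ends. The
result is nondeleting, and expanding each rank-0 symbol `e` into `e(⊥)` leaves `⊥` as the only
rank-0 symbol on both sides.
-/

theorem RTree.induction_mem {α : Type} {motive : RTree α → Prop}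
    (node : ∀ a ts, (∀ t ∈ ts, motive t) → motive (.node a ts)) : ∀ t, motive t
  | .node a ts => node a ts fun t _ => RTree.induction_mem node t

theorem MRhs.induction_mem {Q D : Type} {motive : MRhs Q D → Prop}
    (out : ∀ d ts, (∀ t ∈ ts, motive t) → motive (.out d ts))
    (param : ∀ j, motive (.param j))
    (call : ∀ q i ps, (∀ t ∈ ps, motive t) → motive (.call q i ps)) : ∀ r, motive r
  | .out d ts => out d ts fun t _ => MRhs.induction_mem out param call t
  | .param j => param j
  | .call q i ps => call q i ps fun t _ => MRhs.induction_mem out param call t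

theorem RTree.map_node {α β : Type} (f : α → β) (a : α) (ts : List (RTree α)) :
    RTree.map f (.node a ts) = .node (f a) (ts.map (RTree.map f)) := by
  suffices ∀ ts, RTree.mapList f ts = ts.map (RTree.map f) by rw [RTree.map, this]
  intro ts
  induction ts with
  | nil => rw [RTree.mapList, List.map_nil]
  | cons t ts ih => rw [RTree.mapList, ih, List.map_cons]

theorem RTree.map_eq_node_iff {α β : Type} {f : α → β} {t : RTree α} {b : β}
    {ws : List (RTree β)} :
    RTree.map f t = .node b ws ↔
      ∃ a ts, t = .node a ts ∧ f a = b ∧ ts.map (RTree.map f) = ws := by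
  obtain ⟨a, ts⟩ := t
  simp [RTree.map_node]

section Determinism

variable {Q S D P : Type}

theorem LARunList.singleton_left {A : LA S P} {s : RTree S} {ps : List P}
    (h : LARunList A [s] ps) : ∃ p, ps = [p] ∧ LARun A s p := by
  cases h with | cons hs hnil => cases hnil; exact ⟨_, rfl, hs⟩

theorem LARunList.singleton_right {A : LA S P} {ss : List (RTree S)} {p : P}
    (h : LARunList A ss [p]) : ∃ s, ss = [s] ∧ LARun A s p := by
  cases h with | cons hs hnil => cases hnil; exact ⟨_, rfl, hs⟩

theorem LARunList.length_eq {A : LA S P} {ss : List (RTree S)} {ps : List P}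
    (h : LARunList A ss ps) : ps.length = ss.length := by
  induction ss generalizing ps with
  | nil => cases h; rfl
  | cons s ss ih => cases h with | cons _ hss => simp [ih hss]

theorem LARunList.det_of_forall {A : LA S P} {ss : List (RTree S)} {ps ps' : List P}
    (hdet : ∀ s ∈ ss, ∀ p p', LARun A s p → LARun A s p' → p = p')
    (h : LARunList A ss ps) (h' : LARunList A ss ps') : ps = ps' := by
  induction ss generalizing ps ps' with
  | nil => cases h; cases h'; rfl
  | cons s ss ih =>
    cases h with | cons hs hss =>
    cases h' with | cons hs' hss' =>
    rw [hdet s (List.mem_cons_self ..) _ _ hs hs',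
      ih (fun s hs => hdet s (List.mem_cons_of_mem _ hs)) hss hss']

theorem LARun.det {A : LA S P} {s : RTree S} {p p' : P} :
    LARun A s p → LARun A s p' → p = p' := by
  induction s using RTree.induction_mem generalizing p p' with
  | node σ ss ih =>
    rintro ⟨hss, hδ⟩ ⟨hss', hδ'⟩
    rw [LARunList.det_of_forall (fun s hs _ _ => ih s hs) hss hss', hδ'] at hδ
    exact (Option.some.inj hδ).symm

variable {M : MTTR Q S D P}

theorem RExpandList.length_eq {ss : List (RTree S)} {rs : List (MRhs Q D)}
    {us : List (RTree (PL Q D))} (h : RExpandList M ss rs us) : us.length = rs.length := by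
  induction rs generalizing us with
  | nil => cases h; rfl
  | cons r rs ih => cases h with | cons _ hus => simp [ih hus]

theorem RExpandList.getElem {ss : List (RTree S)} {rs : List (MRhs Q D)}
    {us : List (RTree (PL Q D))} (h : RExpandList M ss rs us) {j : ℕ} (hj : j < rs.length) :
    RExpand M ss rs[j] (us[j]'(h.length_eq ▸ hj)) := by
  induction rs generalizing us j with
  | nil => simp at hj
  | cons r rs ih =>
    cases h with | cons hu hus =>
    cases j with
    | zero => exact hu
    | succ j => exact ih hus (Nat.lt_of_succ_lt_succ hj)

theorem RExpandList.exists_of_mem {ss : List (RTree S)} {rs : List (MRhs Q D)}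
    {us : List (RTree (PL Q D))} (h : RExpandList M ss rs us) :
    ∀ r ∈ rs, ∃ u, RExpand M ss r u := by
  induction rs generalizing us with
  | nil => simp
  | cons r' rs ih =>
    cases h with | cons hu hus =>
    rintro r (_ | ⟨_, hr⟩)
    exacts [⟨_, hu⟩, ih hus r hr]

theorem RExpandList.exists_of_forall {ss : List (RTree S)} {rs : List (MRhs Q D)}
    (h : ∀ r ∈ rs, ∃ u, RExpand M ss r u) : ∃ us, RExpandList M ss rs us := by
  induction rs with
  | nil => exact ⟨[], .nil⟩
  | cons r rs ih =>
    obtain ⟨u, hu⟩ := h r (List.mem_cons_self ..)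
    obtain ⟨us, hus⟩ := ih fun r hr => h r (List.mem_cons_of_mem _ hr)
    exact ⟨u :: us, .cons hu hus⟩

theorem RExpandList.det_of_forall {ss : List (RTree S)} {rs : List (MRhs Q D)}
    {us us' : List (RTree (PL Q D))}
    (hdet : ∀ r ∈ rs, ∀ u u', RExpand M ss r u → RExpand M ss r u' → u = u')
    (h : RExpandList M ss rs us) (h' : RExpandList M ss rs us') : us = us' := by
  induction rs generalizing us us' with
  | nil => cases h; cases h'; rfl
  | cons r rs ih =>
    cases h with | cons hu hus =>
    cases h' with | cons hu' hus' =>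
    rw [hdet r (List.mem_cons_self ..) _ _ hu hu',
      ih (fun r hr => hdet r (List.mem_cons_of_mem _ hr)) hus hus']

theorem RExpand.det_of_forall {ss : List (RTree S)}
    (hdet : ∀ s ∈ ss, ∀ q u u', REval M q s u → REval M q s u' → u = u') :
    ∀ {r : MRhs Q D} {u u'}, RExpand M ss r u → RExpand M ss r u' → u = u' := by
  intro r
  induction r using MRhs.induction_mem with
  | out d ts ih =>
    rintro _ _ ⟨hus⟩ ⟨hus'⟩
    rw [RExpandList.det_of_forall (fun t ht _ _ => ih t ht) hus hus']
  | param j => rintro _ _ ⟨⟩ ⟨⟩; rfl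
  | call q i ps ih =>
    intro u u' h h'
    cases h with | call hsi hvs hev =>
    cases h' with | call hsi' hvs' hev' =>
    rw [hsi] at hsi'
    cases hsi'
    rw [RExpandList.det_of_forall (fun t ht _ _ => ih t ht) hvs hvs',
      hdet _ (List.mem_of_getElem? hsi) _ _ _ hev hev']

theorem REval.det {q : Q} {s : RTree S} {u u' : RTree (PL Q D)} :
    REval M q s u → REval M q s u' → u = u' := by
  induction s using RTree.induction_mem generalizing q u u' with
  | node σ ss ih =>
    rintro ⟨hps, hr, hex⟩ ⟨hps', hr', hex'⟩
    rw [LARunList.det_of_forall (fun _ _ _ _ => LARun.det) hps hps', hr'] at hr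
    cases hr
    exact RExpand.det_of_forall (fun s hs _ _ _ => ih s hs) hex hex'

theorem RExpand.det {ss : List (RTree S)} {r : MRhs Q D} {u u' : RTree (PL Q D)} :
    RExpand M ss r u → RExpand M ss r u' → u = u' :=
  RExpand.det_of_forall fun _ _ _ _ _ => REval.det

end Determinism

section Expand

variable {α : Type}

theorem expandRk_le_one (a : Option α) : expandRk a ≤ 1 := by
  cases a <;> simp [expandRk]

theorem existsUnique_expandRk_eq_zero : ∃! a : Option α, expandRk a = 0 :=
  ⟨none, rfl, fun a ha => by cases a <;> simp_all [expandRk]⟩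

theorem ExpandRel.det {s : RTree α} {T T' : RTree (Option α)}
    (h : ExpandRel s T) (h' : ExpandRel s T') : T = T' := by
  induction h generalizing T' with
  | leaf => cases h'; rfl
  | step _ ih => cases h' with | step h' => rw [ih h']

theorem ExpandRel.wf {s : RTree α} {T : RTree (Option α)} (h : ExpandRel s T) :
    RTree.WF expandRk T := by
  induction h with
  | leaf => exact .node rfl (by simpa using .node rfl (by simp))
  | step _ ih => exact .node rfl (by simpa using ih)

theorem ExpandRel.of_mem_children {a : α} {ss : List (RTree α)} {c : RTree (Option α)}
    (h : ExpandRel (.node a ss) (.node (some a) [c])) {s : RTree α} (hs : s ∈ ss) :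
    ss = [s] ∧ ExpandRel s c := by
  cases h with
  | leaf => simp at hs
  | step h => obtain rfl := List.mem_singleton.1 hs; exact ⟨rfl, h⟩

end Expand

/-- `t` is a chain of output symbols ending in the parameter `y_{κ+1}` (or, if `κ = none`, in a
rank-0 output symbol `e`), and `t'` is its image in the normalized transducer, where that
parameter becomes `y₁` and `e` becomes `e(⊥)`. -/
inductive SpineExpand {Q Q' D : Type} (K : ℕ) :
    RTree (PL Q D) → Option (Fin K) → RTree (PL Q' (Option D)) → Prop
  | param (j : Fin K) : SpineExpand K (.node (.pr j) []) (some j) (.node (.pr 0) [])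
  | leaf (d : D) :
      SpineExpand K (.node (.out d) []) none (.node (.out (some d)) [.node (.out none) []])
  | cons (d : D) {t κ t'} : SpineExpand K t κ t' →
      SpineExpand K (.node (.out d) [t]) κ (.node (.out (some d)) [t'])

namespace SpineExpand

variable {Q Q' D : Type} {K : ℕ}

theorem param_inv {j : ℕ} {κ : Option (Fin K)} {t' : RTree (PL Q' (Option D))}
    (h : SpineExpand (Q := Q) K (.node (.pr j) []) κ t') :
    ∃ hj : j < K, κ = some ⟨j, hj⟩ ∧ t' = .node (.pr 0) [] := by
  generalize ht : (RTree.node (PL.pr j) [] : RTree (PL Q D)) = t at h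
  cases h <;> simp only [RTree.node.injEq, PL.pr.injEq, reduceCtorEq, false_and] at ht
  obtain ⟨rfl, -⟩ := ht
  exact ⟨Fin.isLt _, rfl, rfl⟩

theorem det {t : RTree (PL Q D)} {κ κ' : Option (Fin K)} {t₁ t₂ : RTree (PL Q' (Option D))}
    (h : SpineExpand K t κ t₁) (h' : SpineExpand K t κ' t₂) : κ = κ' ∧ t₁ = t₂ := by
  induction h generalizing κ' t₂ with
  | param j =>
    obtain ⟨_, rfl, rfl⟩ := param_inv h'
    exact ⟨rfl, rfl⟩
  | leaf d => cases h'; exact ⟨rfl, rfl⟩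
  | cons d _ ih => cases h' with | cons _ h' => obtain ⟨rfl, rfl⟩ := ih h'; exact ⟨rfl, rfl⟩

theorem psubst_of_none {t : RTree (PL Q D)} {t' : RTree (PL Q' (Option D))}
    (h : SpineExpand K t none t') (vs : List (RTree (PL Q D)))
    (ws : List (RTree (PL Q' (Option D)))) : psubst vs t = t ∧ psubst ws t' = t' := by
  generalize hκ : (none : Option (Fin K)) = κ at h
  induction h with
  | param j => cases hκ
  | leaf d => simp [psubst, psubstList]
  | cons d _ ih => simp [psubst, psubstList, ih hκ]

theorem psubst {t : RTree (PL Q D)} {t' : RTree (PL Q' (Option D))} {j : Fin K}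
    (h : SpineExpand K t (some j) t') {vs : List (RTree (PL Q D))} (hj : j.val < vs.length)
    {κ : Option (Fin K)} {v' : RTree (PL Q' (Option D))} (hv' : SpineExpand K vs[j.val] κ v') :
    SpineExpand K (_root_.psubst vs t) κ (_root_.psubst [v'] t') := by
  generalize hκ : some j = κ₀ at h
  induction h with
  | param j' =>
    cases hκ
    simpa [_root_.psubst, List.getD_eq_getElem?_getD, hj] using hv'
  | leaf d => cases hκ
  | cons d _ ih => simpa [_root_.psubst, psubstList] using cons d (ih hκ)

theorem map_out_left {t : RTree D} {κ : Option (Fin K)} {u : RTree (PL Q' (Option D))}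
    (h : SpineExpand (Q := Q) K (RTree.map PL.out t) κ u) :
    κ = none ∧ ∃ U, ExpandRel t U ∧ u = RTree.map PL.out U := by
  induction t using RTree.induction_mem generalizing κ u with
  | node d ts ih =>
    rw [RTree.map_node] at h
    match ts, h with
    | [], .leaf _ =>
      exact ⟨rfl, _, .leaf, by simp only [RTree.map_node, List.map_cons, List.map_nil]⟩
    | [t], .cons _ h =>
      obtain ⟨rfl, U, hU, rfl⟩ := ih t (List.mem_singleton_self _) h
      exact ⟨rfl, _, .step hU, by simp only [RTree.map_node, List.map_cons, List.map_nil]⟩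

theorem map_out_right {t : RTree (PL Q D)} {κ : Option (Fin K)} {U : RTree (Option D)}
    (h : SpineExpand (Q' := Q') K t κ (RTree.map PL.out U)) :
    κ = none ∧ ∃ u, t = RTree.map PL.out u ∧ ExpandRel u U := by
  generalize hw : RTree.map PL.out U = w at h
  induction h generalizing U with
  | param j =>
    obtain ⟨_, _, -, ha, -⟩ := RTree.map_eq_node_iff.1 hw
    cases ha
  | leaf d =>
    obtain ⟨_, _, rfl, ⟨⟩, hus⟩ := RTree.map_eq_node_iff.1 hw
    obtain ⟨U, rfl, hU⟩ := List.map_eq_singleton_iff.1 hus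
    obtain ⟨_, _, rfl, ⟨⟩, hvs⟩ := RTree.map_eq_node_iff.1 hU
    obtain rfl := List.map_eq_nil_iff.1 hvs
    exact ⟨rfl, _, by simp only [RTree.map_node, List.map_nil], .leaf⟩
  | cons d _ ih =>
    obtain ⟨_, _, rfl, ⟨⟩, hus⟩ := RTree.map_eq_node_iff.1 hw
    obtain ⟨U, rfl, hU⟩ := List.map_eq_singleton_iff.1 hus
    obtain ⟨hκ, u, rfl, hu⟩ := ih hU
    exact ⟨hκ, _, by simp only [RTree.map_node, List.map_cons, List.map_nil], .step hu⟩

theorem of_psubst {u₀ : RTree (PL Q D)} {u₀' : RTree (PL Q' (Option D))} {j : Fin K}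
    (h₀ : SpineExpand K u₀ (some j) u₀') {vs : List (RTree (PL Q D))} (hj : j.val < vs.length)
    {κ : Option (Fin K)} {u' : RTree (PL Q' (Option D))}
    (h : SpineExpand K (_root_.psubst vs u₀) κ u') :
    ∃ v', SpineExpand K vs[j.val] κ v' ∧ u' = _root_.psubst [v'] u₀' := by
  generalize hκ : some j = κ₀ at h₀
  induction h₀ generalizing u' with
  | param j' =>
    cases hκ
    refine ⟨u', ?_, by simp [_root_.psubst]⟩
    simpa [_root_.psubst, List.getD_eq_getElem?_getD, hj] using h
  | leaf d => cases hκ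
  | cons d _ ih =>
    simp only [_root_.psubst, psubstList] at h
    cases h with | cons _ h =>
    obtain ⟨v', hv', rfl⟩ := ih h hκ
    exact ⟨v', hv', by simp [_root_.psubst, psubstList]⟩

end SpineExpand

section LeafKind

variable {Q D : Type} (K : ℕ) (f : Q → Option (Option (Fin K)))

mutual
  /-- The leaf kind of the value of a right-hand side, given the leaf kinds `f q` of the values
  of the states on the input subtree. A leaf kind `some κ` says that the value is defined and
  ends in the parameter `y_{κ+1}` (in a rank-0 output symbol if `κ = none`); `none` says that it
  is undefined. -/
  def leafKind : MRhs Q D → Option (Option (Fin K))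
    | .out _ [] => some none
    | .out _ (t :: _) => leafKind t
    | .param j => if h : j < K then some (some ⟨j, h⟩) else none
    | .call q _ ps =>
      -- parameters are passed by value: a deleted argument must be defined as well
      match leafKindList ps, f q with
      | some _, some none => some none
      | some κs, some (some j) => κs[j.val]?
      | _, _ => none
  def leafKindList : List (MRhs Q D) → Option (List (Option (Fin K)))
    | [] => some []
    | t :: ts =>
      match leafKind t, leafKindList ts with
      | some κ, some κs => some (κ :: κs)
      | _, _ => none
end

mutual
  /-- The right-hand side of the normalized rule: the output spine of a right-hand side, keeping
  of each call only the argument in which the value of the called state ends. -/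
  def normRhs : MRhs Q D → Option (MRhs (Q × Option (Fin K)) (Option D))
    | .out d [] => some (.out (some d) [.out none []])
    | .out d (t :: _) => (normRhs t).map fun t' => .out (some d) [t']
    | .param _ => some (.param 0)
    | .call q _ ps =>
      match f q with
      | some none => some (.call (q, none) 0 [])
      | some (some j) => (normRhsNth ps j.val).map fun t' => .call (q, some j) 0 [t']
      | none => none
  def normRhsNth : List (MRhs Q D) → ℕ → Option (MRhs (Q × Option (Fin K)) (Option D))
    | [], _ => none
    | t :: _, 0 => normRhs t
    | _ :: ts, j + 1 => normRhsNth ts j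
end

def leafArity : Option (Fin K) → ℕ
  | none => 0
  | some _ => 1

variable {K f}

theorem leafArity_le_one (κ : Option (Fin K)) : leafArity K κ ≤ 1 := by
  cases κ <;> simp [leafArity]

theorem leafKindList_isSome_iff {rs : List (MRhs Q D)} :
    (leafKindList K f rs).isSome ↔ ∀ r ∈ rs, (leafKind K f r).isSome := by
  induction rs with
  | nil => simp [leafKindList]
  | cons r rs ih =>
    rw [leafKindList, List.forall_mem_cons, ← ih]
    cases leafKind K f r <;> cases leafKindList K f rs <;> simp

theorem leafKindList_getElem? {rs : List (MRhs Q D)} {κs : List (Option (Fin K))}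
    (h : leafKindList K f rs = some κs) (j : ℕ) : κs[j]? = rs[j]?.bind (leafKind K f) := by
  induction rs generalizing κs j with
  | nil => simp_all [leafKindList]
  | cons r rs ih =>
    rw [leafKindList] at h
    cases hr : leafKind K f r <;> cases hrs : leafKindList K f rs <;> simp only [hr, hrs,
      reduceCtorEq, Option.some.injEq] at h
    subst h
    cases j <;> simp [hr, ih hrs]

theorem leafKind_call_eq_some {q : Q} {i : ℕ} {ps : List (MRhs Q D)} {κ : Option (Fin K)} :
    leafKind K f (.call q i ps) = some κ ↔ (leafKindList K f ps).isSome ∧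
      (f q = some none ∧ κ = none ∨
        ∃ j : Fin K, f q = some (some j) ∧ ps[j.val]?.bind (leafKind K f) = some κ) := by
  rw [leafKind]
  cases hps : leafKindList K f ps with
  | none => simp
  | some κs =>
    rcases hq : f q with _ | _ | j
    · simp
    · simp [eq_comm]
    · simp [leafKindList_getElem? hps]

theorem normRhsNth_eq {ps : List (MRhs Q D)} {j : ℕ} :
    normRhsNth K f ps j = ps[j]?.bind (normRhs K f) := by
  induction ps generalizing j with
  | nil => simp [normRhsNth]
  | cons p ps ih => cases j <;> simp [normRhsNth, ih]

theorem normRhs_call_of_none {q : Q} {i : ℕ} {ps : List (MRhs Q D)} (hq : f q = some none) :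
    normRhs K f (.call q i ps) = some (.call (q, none) 0 []) := by
  rw [normRhs, hq]

theorem normRhs_call_of_some {q : Q} {i : ℕ} {ps : List (MRhs Q D)} {j : Fin K}
    (hq : f q = some (some j)) : normRhs K f (.call q i ps) =
      (ps[j.val]?.bind (normRhs K f)).map fun t' => .call (q, some j) 0 [t'] := by
  rw [normRhs, hq]
  dsimp only
  rw [normRhsNth_eq]

theorem normRhs_wf {r : MRhs Q D} {κ : Option (Fin K)} {r'} (hκ : leafKind K f r = some κ)
    (hr' : normRhs K f r = some r') :
    RhsWF expandRk (fun q : Q × Option (Fin K) => leafArity K q.2) 1 (leafArity K κ) r' := by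
  induction r using MRhs.induction_mem generalizing κ r' with
  | out d ts ih =>
    rcases ts with _ | ⟨t, ts⟩
    · simp only [leafKind, Option.some.injEq] at hκ
      simp only [normRhs, Option.some.injEq] at hr'
      subst hκ hr'
      exact .out rfl (by simpa using .out rfl (by simp))
    · rw [leafKind] at hκ
      obtain ⟨t', ht', rfl⟩ := Option.map_eq_some_iff.1 (by rwa [normRhs] at hr')
      exact .out rfl (by simpa using ih t (List.mem_cons_self ..) hκ ht')
  | param j =>
    rw [leafKind] at hκ
    split_ifs at hκ
    cases hκ
    cases hr'
    exact .param (by simp [leafArity])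
  | call q i ps ih =>
    obtain ⟨-, ⟨hq, rfl⟩ | ⟨j, hq, hj⟩⟩ := leafKind_call_eq_some.1 hκ
    · rw [normRhs_call_of_none hq] at hr'
      cases hr'
      exact .call Nat.one_pos rfl (by simp)
    · rw [normRhs_call_of_some hq] at hr'
      obtain ⟨p, hp, hpκ⟩ := Option.bind_eq_some_iff.1 hj
      obtain ⟨p', hp', rfl⟩ := Option.map_eq_some_iff.1 hr'
      rw [hp, Option.bind_some] at hp'
      exact .call Nat.one_pos rfl
        (by simpa using ih p (List.mem_of_getElem? hp) hpκ hp')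

theorem normRhs_paramOccurs {r : MRhs Q D} {j : Fin K} {r'}
    (hκ : leafKind K f r = some (some j)) (hr' : normRhs K f r = some r') :
    ParamOccurs 0 r' := by
  induction r using MRhs.induction_mem generalizing r' with
  | out d ts ih =>
    rcases ts with _ | ⟨t, ts⟩
    · simp [leafKind] at hκ
    · rw [leafKind] at hκ
      obtain ⟨t', ht', rfl⟩ := Option.map_eq_some_iff.1 (by rwa [normRhs] at hr')
      exact .out (List.mem_singleton_self _) (ih t (List.mem_cons_self ..) hκ ht')
  | param j =>
    cases hr'
    exact .param
  | call q i ps ih =>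
    obtain ⟨-, ⟨-, hκ⟩ | ⟨j, hq, hj⟩⟩ := leafKind_call_eq_some.1 hκ
    · cases hκ
    · rw [normRhs_call_of_some hq] at hr'
      obtain ⟨p, hp, hpκ⟩ := Option.bind_eq_some_iff.1 hj
      obtain ⟨p', hp', rfl⟩ := Option.map_eq_some_iff.1 hr'
      rw [hp, Option.bind_some] at hp'
      exact .call (List.mem_singleton_self _) (ih p (List.mem_of_getElem? hp) hpκ hp')

end LeafKind

section Shape

variable {Q Q' S D P : Type} {M : MTTR Q S D P} {K : ℕ}

theorem MTTR.Proper.rhsWF (hM : M.Proper) {q : Q} {σ : S} {ps : List P} {r : MRhs Q D}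
    (hr : M.rules q σ ps = some r) {ss : List (RTree S)} (hlen : ss.length = M.rkS σ) :
    RhsWF M.rkD M.prm ss.length (M.prm q) r :=
  hlen ▸ hM.2 _ _ _ _ hr

theorem exists_spineExpand_of_rexpand (hD : ∀ d, M.rkD d ≤ 1) {ss : List (RTree S)}
    (hss : ∀ s ∈ ss, ∀ q t, REval M q s t →
      ∃ κ t', SpineExpand (Q' := Q') K t κ t' ∧ ∀ j ∈ κ, j.val < M.prm q)
    {k m : ℕ} (hm : m ≤ K) {r : MRhs Q D} (hr : RhsWF M.rkD M.prm k m r)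
    {u : RTree (PL Q D)} (hu : RExpand M ss r u) :
    ∃ κ u', SpineExpand (Q' := Q') K u κ u' ∧ ∀ j ∈ κ, j.val < m := by
  induction r using MRhs.induction_mem generalizing u with
  | out d ts ih =>
    cases hu with | out hus =>
    cases hr with | out hlen hts =>
    match ts, hus with
    | [], .nil => exact ⟨none, _, .leaf d, by simp⟩
    | [t], .cons ht .nil =>
      obtain ⟨κ, u', hsp, hκ⟩ := ih t (List.mem_singleton_self _) (hts t (by simp)) ht
      exact ⟨κ, _, .cons d hsp, hκ⟩
    | _ :: _ :: _, _ => exact absurd (hD d) (by simp [← hlen])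
  | param j =>
    cases hu
    cases hr with | param hj =>
    exact ⟨some ⟨j, by omega⟩, _, .param ⟨j, by omega⟩, by simpa using hj⟩
  | call q i ps ih =>
    cases hu with | call hsi hvs hev =>
    cases hr with | call _ hlen hps =>
    obtain ⟨κ₀, u₀', hsp₀, hκ₀⟩ := hss _ (List.mem_of_getElem? hsi) q _ hev
    rcases κ₀ with _ | j
    · exact ⟨none, u₀', by rwa [(hsp₀.psubst_of_none _ []).1], by simp⟩
    · have hj : j.val < ps.length := hlen ▸ hκ₀ j rfl
      obtain ⟨κ, v', hspv, hκ⟩ :=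
        ih _ (List.getElem_mem hj) (hps _ (List.getElem_mem hj)) (hvs.getElem hj)
      exact ⟨κ, _, hsp₀.psubst (hvs.length_eq ▸ hj) hspv, hκ⟩

theorem exists_spineExpand_of_reval (hM : M.Proper) (hD : ∀ d, M.rkD d ≤ 1)
    (hK : ∀ q, M.prm q ≤ K) {s : RTree S} (hs : RTree.WF M.rkS s) {q : Q}
    {t : RTree (PL Q D)} (ht : REval M q s t) :
    ∃ κ t', SpineExpand (Q' := Q') K t κ t' ∧ ∀ j ∈ κ, j.val < M.prm q := by
  induction s using RTree.induction_mem generalizing q t with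
  | node σ ss ih =>
    cases ht with | step _ hrule hex =>
    cases hs with | node hlen hss =>
    exact exists_spineExpand_of_rexpand hD (fun s hs _ _ => ih s hs (hss s hs))
      (hK q) (hM.rhsWF hrule hlen) hex

end Shape

namespace MTTR

variable {Q S D P : Type} (M : MTTR Q S D P) [Fintype Q]

def maxPrm : ℕ := Finset.univ.sup M.prm

theorem le_maxPrm (q : Q) : M.prm q ≤ M.maxPrm :=
  Finset.le_sup (Finset.mem_univ q)

abbrev NormState := Q × Option (Fin M.maxPrm)

abbrev LeafMap := Q → Option (Option (Fin M.maxPrm))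

/-- A look-ahead state of `M` on the original tree (`none` on `⊥`) together with the leaf kinds
of all states on it. -/
abbrev NormLA := Option P × M.LeafMap

def nodeLeafMap (σ : S) (ps : List P) (f : M.LeafMap) : M.LeafMap :=
  fun q => (M.rules q σ ps).bind (leafKind M.maxPrm f)

def normDelta : Option S → List M.NormLA → Option M.NormLA
  | none, [] => some (none, fun _ => none)
  | some σ, [(po, f)] =>
    if po.toList.length = M.rkS σ then
      (M.la.delta σ po.toList).map fun p => (some p, M.nodeLeafMap σ po.toList f)
    else none
  | _, _ => none

def normRules (q : M.NormState) :
    Option S → List M.NormLA → Option (MRhs M.NormState (Option D))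
  | some σ, [(po, f)] =>
    if po.toList.length = M.rkS σ then
      (M.rules q.1 σ po.toList).bind fun r =>
        -- the rule is used only in the state carrying its actual leaf kind, so nothing is deleted
        if leafKind M.maxPrm f r = some q.2 then normRhs M.maxPrm f r else none
    else none
  | _, _ => none

def normalize : MTTR M.NormState (Option S) (Option D) M.NormLA where
  rkS := expandRk
  rkD := expandRk
  prm q := leafArity _ q.2
  init := (M.init, none)
  la := ⟨M.normDelta⟩
  rules := M.normRules

def IsLeafMap (s : RTree S) (f : M.LeafMap) : Prop :=
  ∀ q κ, f q = some κ ↔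
    ∃ t t', REval M q s t ∧ SpineExpand (Q' := M.NormState) M.maxPrm t κ t'

def Simulates (s : RTree S) (T : RTree (Option S)) : Prop :=
  ∀ q κ t t', REval M q s t → SpineExpand M.maxPrm t κ t' → REval M.normalize (q, κ) T t'

/-- `ss` are the children (none or one) of a node of an input tree of `M`, and `c` is the
unique child of the corresponding node of its expansion. -/
def ChildSpec (ss : List (RTree S)) (c : RTree (Option S)) (f : M.LeafMap) : Prop :=
  ∀ s ∈ ss, RTree.WF M.rkS s ∧ M.IsLeafMap s f ∧ M.Simulates s c

def ChildRuns (ss : List (RTree S)) (c : RTree (Option S)) : Prop :=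
  ∀ ps, LARunList M.la ss ps →
    ∃ π : M.NormLA, LARun M.normalize.la c π ∧ π.1.toList = ps ∧ M.ChildSpec ss c π.2

variable {M}

theorem normDelta_eq_some {a : Option S} {πs : List M.NormLA} {π : M.NormLA}
    (h : M.normDelta a πs = some π) :
    a = none ∧ πs = [] ∧ π = (none, fun _ => none) ∨
      ∃ σ po f p, a = some σ ∧ πs = [(po, f)] ∧ po.toList.length = M.rkS σ ∧
        M.la.delta σ po.toList = some p ∧ π = (some p, M.nodeLeafMap σ po.toList f) := by
  unfold normDelta at h
  split at h
  · cases h; exact .inl ⟨rfl, rfl, rfl⟩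
  · split_ifs at h with hlen
    obtain ⟨p, hp, rfl⟩ := Option.map_eq_some_iff.1 h
    exact .inr ⟨_, _, _, p, rfl, rfl, hlen, hp, rfl⟩
  · cases h

theorem normDelta_some {σ : S} {po : Option P} {f : M.LeafMap} {p : P}
    (hlen : po.toList.length = M.rkS σ) (hδ : M.la.delta σ po.toList = some p) :
    M.normDelta (some σ) [(po, f)] = some (some p, M.nodeLeafMap σ po.toList f) := by
  simp [normDelta, hlen, hδ]

theorem normRules_eq_some {q : Q} {κ : Option (Fin M.maxPrm)} {a : Option S}
    {πs : List M.NormLA} {r' : MRhs M.NormState (Option D)}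
    (h : M.normRules (q, κ) a πs = some r') :
    ∃ σ po f, a = some σ ∧ πs = [(po, f)] ∧ po.toList.length = M.rkS σ ∧
      ∃ r, M.rules q σ po.toList = some r ∧ leafKind M.maxPrm f r = some κ ∧
        normRhs M.maxPrm f r = some r' := by
  unfold normRules at h
  split at h
  · split_ifs at h with hlen
    obtain ⟨r, hr, h⟩ := Option.bind_eq_some_iff.1 h
    split_ifs at h with hκ
    exact ⟨_, _, _, rfl, rfl, hlen, r, hr, hκ, h⟩
  · cases h

theorem normRules_some {q : Q} {κ : Option (Fin M.maxPrm)} {σ : S} {po : Option P}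
    {f : M.LeafMap} {r : MRhs Q D} {r' : MRhs M.NormState (Option D)}
    (hlen : po.toList.length = M.rkS σ) (hr : M.rules q σ po.toList = some r)
    (hκ : leafKind M.maxPrm f r = some κ) (hr' : normRhs M.maxPrm f r = some r') :
    M.normRules (q, κ) (some σ) [(po, f)] = some r' := by
  simp [normRules, hlen, hr, hκ, hr']

theorem laRun_normalize_bot :
    LARun M.normalize.la (.node none []) (none, fun _ => none) :=
  .node .nil rfl

theorem exists_rexpand_of_leafKind (hD : ∀ d, M.rkD d ≤ 1) {ss : List (RTree S)}
    {f : M.LeafMap} (hss : ∀ s ∈ ss, M.IsLeafMap s f) {m : ℕ} {r : MRhs Q D}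
    (hr : RhsWF M.rkD M.prm ss.length m r) {κ : Option (Fin M.maxPrm)}
    (hκ : leafKind M.maxPrm f r = some κ) : ∃ u, RExpand M ss r u := by
  induction r using MRhs.induction_mem generalizing κ with
  | out d ts ih =>
    cases hr with | out hlen hts =>
    match ts, hκ with
    | [], _ => exact ⟨_, .out .nil⟩
    | [t], hκ =>
      obtain ⟨u, hu⟩ := ih t (List.mem_singleton_self _) (hts t (by simp)) hκ
      exact ⟨_, .out (.cons hu .nil)⟩
    | _ :: _ :: _, _ => exact absurd (hD d) (by simp [← hlen])
  | param j => exact ⟨_, .param⟩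
  | call q i ps ih =>
    cases hr with | call hi _ hps =>
    obtain ⟨hlist, hq⟩ := leafKind_call_eq_some.1 hκ
    obtain ⟨κ₀, hq⟩ : ∃ κ₀, f q = some κ₀ := by
      rcases hq with ⟨hq, -⟩ | ⟨j, hq, -⟩ <;> exact ⟨_, hq⟩
    obtain ⟨t, -, ht, -⟩ := (hss _ (List.getElem_mem hi) q κ₀).1 hq
    obtain ⟨vs, hvs⟩ := RExpandList.exists_of_forall fun p hp =>
      have ⟨_, hpκ⟩ := Option.isSome_iff_exists.1 (leafKindList_isSome_iff.1 hlist p hp)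
      ih p hp (hps p hp) hpκ
    exact ⟨_, .call (List.getElem?_eq_getElem hi) hvs ht⟩

theorem ChildSpec.exists_spineExpand (hM : M.Proper) (hD : ∀ d, M.rkD d ≤ 1)
    {ss : List (RTree S)} {c : RTree (Option S)} {f : M.LeafMap} (hspec : M.ChildSpec ss c f) :
    ∀ s ∈ ss, ∀ q t, REval M q s t → ∃ κ t',
      SpineExpand (Q' := M.NormState) M.maxPrm t κ t' ∧ ∀ j ∈ κ, j.val < M.prm q :=
  fun s hs _ _ => exists_spineExpand_of_reval hM hD (le_maxPrm M) (hspec s hs).1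

theorem leafKind_eq_of_rexpand (hM : M.Proper) (hD : ∀ d, M.rkD d ≤ 1)
    {ss : List (RTree S)} {c : RTree (Option S)} {f : M.LeafMap}
    (hspec : M.ChildSpec ss c f) {k m : ℕ} (hm : m ≤ M.maxPrm) {r : MRhs Q D}
    (hr : RhsWF M.rkD M.prm k m r) {u : RTree (PL Q D)} {κ : Option (Fin M.maxPrm)}
    {u' : RTree (PL M.NormState (Option D))} (hu : RExpand M ss r u)
    (hsp : SpineExpand M.maxPrm u κ u') : leafKind M.maxPrm f r = some κ := by
  induction r using MRhs.induction_mem generalizing u κ u' with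
  | out d ts ih =>
    cases hu with | out hus =>
    cases hr with | out hlen hts =>
    match ts, hus, hsp with
    | [], .nil, .leaf _ => rfl
    | [t], .cons ht .nil, .cons _ hsp =>
      rw [leafKind]
      exact ih t (List.mem_singleton_self _) (hts t (by simp)) ht hsp
    | _ :: _ :: _, _, _ => exact absurd (hD d) (by simp [← hlen])
  | param j =>
    cases hu
    obtain ⟨hj, rfl, -⟩ := hsp.param_inv
    simp [leafKind, hj]
  | call q i ps ih =>
    cases hu with | call hsi hvs hev =>
    cases hr with | call _ hlen hps =>
    have hshape := hspec.exists_spineExpand hM hD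
    obtain ⟨κ₀, u₀', hsp₀, hκ₀⟩ := hshape _ (List.mem_of_getElem? hsi) q _ hev
    have hq := ((hspec _ (List.mem_of_getElem? hsi)).2.1 q κ₀).2 ⟨_, _, hev, hsp₀⟩
    have hlist : (leafKindList M.maxPrm f ps).isSome := by
      refine leafKindList_isSome_iff.2 fun p hp => ?_
      obtain ⟨v, hv⟩ := hvs.exists_of_mem p hp
      obtain ⟨κv, v', hspv, -⟩ := exists_spineExpand_of_rexpand hD hshape hm (hps p hp) hv
      simp [ih p hp (hps p hp) hv hspv]
    refine leafKind_call_eq_some.2 ⟨hlist, ?_⟩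
    rcases κ₀ with _ | j
    · rw [(hsp₀.psubst_of_none _ []).1] at hsp
      exact .inl ⟨hq, (hsp.det hsp₀).1⟩
    · have hj : j.val < ps.length := hlen ▸ hκ₀ j rfl
      obtain ⟨v', hspv, -⟩ := hsp₀.of_psubst (hvs.length_eq ▸ hj) hsp
      refine .inr ⟨j, hq, ?_⟩
      rw [List.getElem?_eq_getElem hj, Option.bind_some]
      exact ih _ (List.getElem_mem hj) (hps _ (List.getElem_mem hj)) (hvs.getElem hj) hspv

theorem exists_normRhs_of_rexpand (hM : M.Proper) (hD : ∀ d, M.rkD d ≤ 1)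
    {ss : List (RTree S)} {c : RTree (Option S)} {f : M.LeafMap}
    (hspec : M.ChildSpec ss c f) {k m : ℕ} {r : MRhs Q D}
    (hr : RhsWF M.rkD M.prm k m r) {u : RTree (PL Q D)} {κ : Option (Fin M.maxPrm)}
    {u' : RTree (PL M.NormState (Option D))} (hu : RExpand M ss r u)
    (hsp : SpineExpand M.maxPrm u κ u') :
    ∃ r', normRhs M.maxPrm f r = some r' ∧ RExpand M.normalize [c] r' u' := by
  induction r using MRhs.induction_mem generalizing u κ u' with
  | out d ts ih =>
    cases hu with | out hus =>
    cases hr with | out hlen hts =>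
    match ts, hus, hsp with
    | [], .nil, .leaf _ => exact ⟨_, rfl, .out (.cons (.out .nil) .nil)⟩
    | [t], .cons ht .nil, .cons _ hsp =>
      obtain ⟨t', ht', hN⟩ := ih t (List.mem_singleton_self _) (hts t (by simp)) ht hsp
      exact ⟨_, by rw [normRhs, ht']; rfl, .out (.cons hN .nil)⟩
    | _ :: _ :: _, _, _ => exact absurd (hD d) (by simp [← hlen])
  | param j =>
    cases hu
    obtain ⟨-, rfl, rfl⟩ := hsp.param_inv
    exact ⟨_, rfl, .param⟩
  | call q i ps ih =>
    cases hu with | @call _ _ _ _ si vs u₀ hsi hvs hev =>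
    cases hr with | call _ hlen hps =>
    obtain ⟨-, hleaf, hsim⟩ := hspec _ (List.mem_of_getElem? hsi)
    obtain ⟨κ₀, u₀', hsp₀, hκ₀⟩ :=
      hspec.exists_spineExpand hM hD _ (List.mem_of_getElem? hsi) q _ hev
    have hq := (hleaf q κ₀).2 ⟨_, _, hev, hsp₀⟩
    have hN₀ := hsim q κ₀ u₀ u₀' hev hsp₀
    rcases κ₀ with _ | j
    · rw [(hsp₀.psubst_of_none _ []).1] at hsp
      obtain ⟨-, rfl⟩ := hsp.det hsp₀
      refine ⟨_, normRhs_call_of_none hq, ?_⟩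
      simpa [(hsp₀.psubst_of_none [] []).2] using RExpand.call (i := 0) rfl .nil hN₀
    · have hj : j.val < ps.length := hlen ▸ hκ₀ j rfl
      obtain ⟨v', hspv, rfl⟩ := hsp₀.of_psubst (hvs.length_eq ▸ hj) hsp
      obtain ⟨p', hp', hN⟩ :=
        ih _ (List.getElem_mem hj) (hps _ (List.getElem_mem hj)) (hvs.getElem hj) hspv
      refine ⟨_, ?_, .call (i := 0) rfl (.cons hN .nil) hN₀⟩
      rw [normRhs_call_of_some hq, List.getElem?_eq_getElem hj, Option.bind_some, hp']
      rfl

theorem rexpand_of_leafKind (hM : M.Proper) (hD : ∀ d, M.rkD d ≤ 1)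
    {ss : List (RTree S)} {c : RTree (Option S)} {f : M.LeafMap}
    (hspec : M.ChildSpec ss c f) {m : ℕ} (hm : m ≤ M.maxPrm) {r : MRhs Q D}
    (hr : RhsWF M.rkD M.prm ss.length m r) {κ : Option (Fin M.maxPrm)}
    (hκ : leafKind M.maxPrm f r = some κ) :
    ∃ u u', RExpand M ss r u ∧ SpineExpand M.maxPrm u κ u' ∧
      ∃ r', normRhs M.maxPrm f r = some r' ∧ RExpand M.normalize [c] r' u' := by
  obtain ⟨u, hu⟩ := exists_rexpand_of_leafKind hD (fun s hs => (hspec s hs).2.1) hr hκ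
  obtain ⟨κ', u', hsp, -⟩ :=
    exists_spineExpand_of_rexpand hD (hspec.exists_spineExpand hM hD) hm hr hu
  obtain rfl : κ' = κ := Option.some.inj
    ((leafKind_eq_of_rexpand hM hD hspec hm hr hu hsp).symm.trans hκ)
  exact ⟨u, u', hu, hsp, exists_normRhs_of_rexpand hM hD hspec hr hu hsp⟩

theorem simulates_node (hM : M.Proper) (hD : ∀ d, M.rkD d ≤ 1) {a : S}
    {ss : List (RTree S)} {c : RTree (Option S)} (hlen : ss.length = M.rkS a)
    (hchild : M.ChildRuns ss c) :
    M.Simulates (.node a ss) (.node (some a) [c]) := by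
  intro q κ t t' ht hsp
  cases ht with | step hps hrule hex =>
  obtain ⟨⟨po, f⟩, hc, rfl, hspec⟩ := hchild _ hps
  have hr := hM.rhsWF hrule hlen
  obtain ⟨r', hr', hN⟩ := exists_normRhs_of_rexpand hM hD hspec hr hex hsp
  exact .step (.cons hc .nil) (normRules_some (hps.length_eq.trans hlen) hrule
    (leafKind_eq_of_rexpand hM hD hspec (le_maxPrm M q) hr hex hsp) hr') hN

theorem exists_leafMap_node (hM : M.Proper) (hD : ∀ d, M.rkD d ≤ 1) {a : S}
    {ss : List (RTree S)} {c : RTree (Option S)} (hlen : ss.length = M.rkS a)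
    (hchild : M.ChildRuns ss c)
    {p : P} (hp : LARun M.la (.node a ss) p) :
    ∃ f, LARun M.normalize.la (.node (some a) [c]) (some p, f) ∧
      M.IsLeafMap (.node a ss) f := by
  cases hp with | node hps hδ =>
  obtain ⟨⟨po, f⟩, hc, rfl, hspec⟩ := hchild _ hps
  refine ⟨_, .node (.cons hc .nil) (normDelta_some (hps.length_eq.trans hlen) hδ), ?_⟩
  intro q κ
  constructor
  · intro hq
    obtain ⟨r, hrule, hκ⟩ := Option.bind_eq_some_iff.1 hq
    have hr := hM.rhsWF hrule hlen
    obtain ⟨u, u', hu, hsp, -⟩ := rexpand_of_leafKind hM hD hspec (le_maxPrm M q) hr hκ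
    exact ⟨u, u', .step hps hrule hu, hsp⟩
  · rintro ⟨t, t', ht, hsp⟩
    cases ht with | step hps' hrule hex =>
    rw [LARunList.det_of_forall (fun _ _ _ _ => LARun.det) hps' hps] at hrule
    have hr := hM.rhsWF hrule hlen
    simpa [nodeLeafMap, hrule] using
      leafKind_eq_of_rexpand hM hD hspec (le_maxPrm M q) hr hex hsp

theorem simulates_and_leafMap (hM : M.Proper) (hD : ∀ d, M.rkD d ≤ 1) {s : RTree S}
    {T : RTree (Option S)} (h : ExpandRel s T) (hs : RTree.WF M.rkS s) :
    M.Simulates s T ∧ ∀ p, LARun M.la s p →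
      ∃ f, LARun M.normalize.la T (some p, f) ∧ M.IsLeafMap s f := by
  induction h with
  | leaf =>
    cases hs with | node hlen _ =>
    have hchild : M.ChildRuns [] (.node none []) := by
      rintro ps ⟨⟩
      exact ⟨_, laRun_normalize_bot, rfl, by simp [ChildSpec]⟩
    exact ⟨simulates_node hM hD hlen hchild, fun _ => exists_leafMap_node hM hD hlen hchild⟩
  | @step a s₁ T₁ _ ih =>
    cases hs with | node hlen hs₁ =>
    have hwf := hs₁ s₁ (List.mem_singleton_self _)
    obtain ⟨hsim, hleaf⟩ := ih hwf
    have hchild : M.ChildRuns [s₁] T₁ := by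
      intro ps hps
      obtain ⟨p, rfl, hp⟩ := hps.singleton_left
      obtain ⟨f, hT₁, hf⟩ := hleaf p hp
      exact ⟨_, hT₁, rfl, by simpa [ChildSpec] using ⟨hwf, hf, hsim⟩⟩
    exact ⟨simulates_node hM hD hlen hchild, fun _ => exists_leafMap_node hM hD hlen hchild⟩

theorem exists_children_of_laRun {c : RTree (Option S)} {π : M.NormLA}
    (hc : LARun M.normalize.la c π) :
    ∃ ss : List (RTree S), (∀ a, ExpandRel (.node a ss) (.node (some a) [c])) ∧
      (∀ s ∈ ss, RTree.WF M.rkS s) ∧ LARunList M.la ss π.1.toList := by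
  induction c using RTree.induction_mem generalizing π with
  | node a cs ih =>
    cases hc with | node hcs hδ =>
    rcases normDelta_eq_some hδ with
      ⟨rfl, rfl, rfl⟩ | ⟨σ, po, f, p, rfl, rfl, hlen, hp, rfl⟩
    · cases hcs
      exact ⟨[], fun _ => .leaf, by simp, .nil⟩
    · obtain ⟨c, rfl, hc⟩ := hcs.singleton_right
      obtain ⟨ss, hrel, hwf, hla⟩ := ih c (List.mem_singleton_self _) hc
      refine ⟨[.node σ ss], fun _ => .step (hrel σ), ?_, .cons (.node hla hp) .nil⟩
      simpa using RTree.WF.node (hla.length_eq.symm.trans hlen) hwf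

theorem childSpec_of_laRun (hM : M.Proper) (hD : ∀ d, M.rkD d ≤ 1) {c : RTree (Option S)}
    {π : M.NormLA} (hc : LARun M.normalize.la c π) {ss : List (RTree S)}
    (hrel : ∀ a, ExpandRel (.node a ss) (.node (some a) [c]))
    (hwf : ∀ s ∈ ss, RTree.WF M.rkS s) (hla : LARunList M.la ss π.1.toList) :
    M.ChildSpec ss c π.2 := by
  intro s hs
  obtain ⟨rfl, hsc⟩ := (hrel s.label).of_mem_children hs -- any parent symbol will do
  obtain ⟨hsim, hleaf⟩ := simulates_and_leafMap hM hD hsc (hwf s hs)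
  obtain ⟨p, -, hp⟩ := hla.singleton_left
  obtain ⟨f, hc', hf⟩ := hleaf p hp
  obtain rfl : π = (some p, f) := hc.det hc'
  exact ⟨hwf s hs, hf, hsim⟩

theorem tau_normalize_subset (hM : M.Proper) (hD : ∀ d, M.rkD d ≤ 1) :
    M.normalize.tau ⊆
      {p | ∃ s t, (s, t) ∈ M.tau ∧ ExpandRel s p.1 ∧ ExpandRel t p.2} := by
  rintro ⟨T, U⟩ ⟨-, hev⟩
  cases hev with | step hπs hrule hex =>
  obtain ⟨σ, po, f, rfl, rfl, hlen, r, hruleM, hκ, hr'⟩ := normRules_eq_some hrule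
  obtain ⟨c, rfl, hc⟩ := hπs.singleton_right
  obtain ⟨ss, hrel, hwf, hla⟩ := exists_children_of_laRun hc
  have hlen' : ss.length = M.rkS σ := hla.length_eq.symm.trans hlen
  obtain ⟨u, u', hu, hsp, r'', hr'', hN⟩ := rexpand_of_leafKind hM hD
    (childSpec_of_laRun hM hD hc hrel hwf hla) (le_maxPrm M _) (hM.rhsWF hruleM hlen') hκ
  cases hr'.symm.trans hr''
  rw [hN.det hex] at hsp
  obtain ⟨-, t, rfl, ht⟩ := hsp.map_out_right
  exact ⟨.node σ ss, t, ⟨.node hlen' hwf, .step hla hruleM hu⟩, hrel σ, ht⟩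

theorem subset_tau_normalize (hM : M.Proper) (hD : ∀ d, M.rkD d ≤ 1) :
    {p | ∃ s t, (s, t) ∈ M.tau ∧ ExpandRel s p.1 ∧ ExpandRel t p.2} ⊆
      M.normalize.tau := by
  rintro ⟨T, U⟩ ⟨s, t, ⟨hs, hev⟩, hsT, htU⟩
  refine ⟨hsT.wf, ?_⟩
  obtain ⟨κ, u', hsp, -⟩ := exists_spineExpand_of_reval hM hD (le_maxPrm M) hs hev
  obtain ⟨rfl, U', htU', rfl⟩ := hsp.map_out_left
  rw [htU'.det htU] at hsp
  exact (simulates_and_leafMap hM hD hsT hs).1 _ _ _ _ hev hsp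

theorem normalize_proper : M.normalize.Proper := by
  refine ⟨rfl, ?_⟩
  rintro ⟨q, κ⟩ a πs r' h
  obtain ⟨σ, po, f, rfl, rfl, -, r, -, hκ, hr'⟩ := normRules_eq_some h
  exact normRhs_wf hκ hr'

theorem normalize_monadic : M.normalize.Monadic :=
  ⟨expandRk_le_one, expandRk_le_one⟩

theorem normalize_normalized : M.normalize.Normalized := by
  refine ⟨?_, fun q => leafArity_le_one q.2, existsUnique_expandRk_eq_zero,
    existsUnique_expandRk_eq_zero⟩
  · rintro ⟨q, _ | j⟩ a πs r' h i hi
    · cases hi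
    obtain ⟨σ, po, f, rfl, rfl, -, r, -, hκ, hr'⟩ := normRules_eq_some h
    obtain rfl : i = 0 := Nat.lt_one_iff.1 hi
    exact normRhs_paramOccurs hκ hr'

end MTTR

theorem monadic_mttr_normalization {Q S D P : Type}
    [Fintype Q] [Fintype S] [Fintype D] [Fintype P]
    (M : MTTR Q S D P) (hM : MTTR.Proper M) (hmon : MTTR.Monadic M) :
    ∃ (Q' : Type) (_ : Fintype Q') (P' : Type) (_ : Fintype P')
      (N : MTTR Q' (Option S) (Option D) P'),
      N.rkS = expandRk ∧ N.rkD = expandRk ∧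
      MTTR.Proper N ∧ MTTR.Monadic N ∧ MTTR.Normalized N ∧
      MTTR.tau N = {p : RTree (Option S) × RTree (Option D) |
        ∃ s t, (s, t) ∈ MTTR.tau M ∧ ExpandRel s p.1 ∧ ExpandRel t p.2} := by
  classical
  exact ⟨M.NormState, inferInstance, M.NormLA, inferInstance, M.normalize, rfl, rfl,
    M.normalize_proper, M.normalize_monadic, M.normalize_normalized,
    (M.tau_normalize_subset hM hmon.2).antisymm (M.subset_tau_normalize hM hmon.2)⟩
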